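/- There exists a constant C > 0 such that for every real ν ≥ 1 and every real δ ≥ 0, one has |J_ν(ν δ)| ≤ C · ν^{-1/2} · (e δ / 2)^ν. -/

import Mathlib

open scoped BigOperators

/-- The Bessel function of the first kind `J_ν(x)` for real order `ν` and `x ≥ 0`. -/
noncomputable def besselJ (ν x : ℝ) : ℝ :=
  ∑' j : ℕ, ((-1) ^ j / (j.factorial * Real.Gamma (ν + j + 1))) * (x / 2) ^ (ν + 2 * (j : ℝ))

/-
Poisson's integral `J_ν(x) = (x/2)^ν / (√π Γ(ν+1/2)) ∫₀¹ s^(-1/2) (1-s)^(ν-1/2) cos(x√s) ds`,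
obtained by integrating the power series termwise against Beta integrals, gives
`|J_ν(x)| ≤ (x/2)^ν / Γ(ν+1)` for `ν > -1/2`, `x ≥ 0`. It remains to bound `Γ(ν+1)` from below
by `√(πν) (ν/e)^ν / e`: with `n = ⌊ν⌋`, log-convexity of `Γ` gives `Γ(ν+1) ≥ n! n^(ν-n)`, and
Stirling's lower bound for `n!` finishes, since `(ν/n)^ν ≤ e^(ν-n+1)`.
-/

open MeasureTheory Real Set Nat

section Beta

variable {a b : ℝ}

lemma ofReal_rpow_mul_one_sub_rpow {s : ℝ} (hs : s ∈ Icc (0 : ℝ) 1) :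
    ((s ^ (a - 1) * (1 - s) ^ (b - 1) : ℝ) : ℂ)
      = (s : ℂ) ^ ((a : ℂ) - 1) * (1 - (s : ℂ)) ^ ((b : ℂ) - 1) := by
  rw [Complex.ofReal_mul, Complex.ofReal_cpow hs.1, Complex.ofReal_cpow (sub_nonneg.2 hs.2)]
  push_cast
  rfl

lemma integrableOn_rpow_mul_one_sub_rpow (ha : 0 < a) (hb : 0 < b) :
    IntegrableOn (fun s : ℝ => s ^ (a - 1) * (1 - s) ^ (b - 1)) (Ioc 0 1) := by
  have h := Complex.betaIntegral_convergent (u := a) (v := b) (by simpa) (by simpa)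
  rw [intervalIntegrable_iff_integrableOn_Ioc_of_le zero_le_one] at h
  refine IntegrableOn.congr_fun h.re (fun s hs => ?_) measurableSet_Ioc
  rw [← ofReal_rpow_mul_one_sub_rpow (Ioc_subset_Icc_self hs), RCLike.re_to_complex,
    Complex.ofReal_re]

lemma integral_rpow_mul_one_sub_rpow (ha : 0 < a) (hb : 0 < b) :
    ∫ s in Ioc 0 1, s ^ (a - 1) * (1 - s) ^ (b - 1) = Gamma a * Gamma b / Gamma (a + b) := by
  have h := Complex.betaIntegral_eq_Gamma_mul_div a b (by simpa) (by simpa)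
  rw [Complex.betaIntegral, intervalIntegral.integral_of_le zero_le_one] at h
  apply Complex.ofReal_injective
  rw [← integral_complex_ofReal, setIntegral_congr_fun measurableSet_Ioc
    (fun s hs => ofReal_rpow_mul_one_sub_rpow (Ioc_subset_Icc_self hs)), h]
  push_cast [← Complex.Gamma_ofReal]
  rfl

end Beta

lemma Nat.factorial_two_mul (j : ℕ) : (2 * j)! = 2 ^ j * j ! * (2 * j - 1)‼ := by
  cases j with
  | zero => rfl
  | succ j =>
    rw [show 2 * (j + 1) = 2 * j + 1 + 1 by ring, factorial_eq_mul_doubleFactorial,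
      show 2 * j + 1 + 1 = 2 * (j + 1) by ring, doubleFactorial_two_mul]
    congr 2

-- The kernel of Poisson's integral `∫₋₁¹ (1 - t²)^(ν-1/2) cos (x t) dt`, in the variable `s = t²`.
noncomputable def besselWeight (ν s : ℝ) : ℝ := s ^ (-(1 / 2) : ℝ) * (1 - s) ^ (ν - 1 / 2)

section PoissonIntegral

variable {ν : ℝ}

lemma besselWeight_nonneg {s : ℝ} (hs : s ∈ Icc (0 : ℝ) 1) : 0 ≤ besselWeight ν s :=
  mul_nonneg (rpow_nonneg hs.1 _) (rpow_nonneg (sub_nonneg.2 hs.2) _)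

lemma pow_mul_besselWeight {s : ℝ} (hs : 0 < s) (j : ℕ) :
    s ^ j * besselWeight ν s = s ^ ((j + 1 / 2 : ℝ) - 1) * (1 - s) ^ ((ν + 1 / 2) - 1) := by
  rw [besselWeight, ← mul_assoc, ← rpow_natCast, ← rpow_add hs]
  ring_nf

lemma integrableOn_pow_mul_besselWeight (hν : -(1 / 2) < ν) (j : ℕ) :
    IntegrableOn (fun s => s ^ j * besselWeight ν s) (Ioc 0 1) :=
  (integrableOn_rpow_mul_one_sub_rpow (by positivity) (by linarith)).congr_fun
    (fun s hs => (pow_mul_besselWeight hs.1 j).symm) measurableSet_Ioc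

lemma integrableOn_besselWeight (hν : -(1 / 2) < ν) :
    IntegrableOn (besselWeight ν) (Ioc 0 1) := by
  simpa using integrableOn_pow_mul_besselWeight hν 0

lemma integral_pow_mul_besselWeight (hν : -(1 / 2) < ν) (j : ℕ) :
    ∫ s in Ioc 0 1, s ^ j * besselWeight ν s
      = Gamma (j + 1 / 2) * Gamma (ν + 1 / 2) / Gamma (ν + j + 1) := by
  rw [setIntegral_congr_fun measurableSet_Ioc (fun s hs => pow_mul_besselWeight hs.1 j),
    integral_rpow_mul_one_sub_rpow (by positivity) (by linarith)]
  ring_nf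

lemma integral_besselWeight (hν : -(1 / 2) < ν) :
    ∫ s in Ioc 0 1, besselWeight ν s = √π * Gamma (ν + 1 / 2) / Gamma (ν + 1) := by
  have h := integral_pow_mul_besselWeight hν 0
  simp only [pow_zero, one_mul, Nat.cast_zero, zero_add, add_zero, Gamma_one_half_eq] at h
  exact h

lemma hasSum_cos_mul_besselWeight (x : ℝ) {s : ℝ} (hs : 0 ≤ s) :
    HasSum (fun j : ℕ => (-1) ^ j * x ^ (2 * j) / (2 * j)! * (s ^ j * besselWeight ν s))
      (cos (x * √s) * besselWeight ν s) := by
  refine ((hasSum_cos (x * √s)).mul_right (besselWeight ν s)).congr_fun fun j => ?_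
  rw [mul_pow, pow_mul (√s), sq_sqrt hs]
  ring

lemma besselJ_term_eq_integral (hν : -(1 / 2) < ν) {x : ℝ} (hx : 0 ≤ x) (j : ℕ) :
    (-1) ^ j / (j ! * Gamma (ν + j + 1)) * (x / 2) ^ (ν + 2 * (j : ℝ))
      = (x / 2) ^ ν / (√π * Gamma (ν + 1 / 2)) *
        ∫ s in Ioc 0 1, (-1) ^ j * x ^ (2 * j) / (2 * j)! * (s ^ j * besselWeight ν s) := by
  have hsplit : (x / 2) ^ (ν + 2 * (j : ℝ)) = (x / 2) ^ ν * (x / 2) ^ (2 * j) := by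
    rcases eq_or_ne j 0 with rfl | hj
    · simp
    · have hj1 : (1 : ℝ) ≤ j := by exact_mod_cast Nat.one_le_iff_ne_zero.2 hj
      rw [← rpow_add_natCast' (by positivity) (by push_cast; linarith)]
      push_cast
      rfl
  have hΓ : Gamma (ν + 1 / 2) ≠ 0 := (Gamma_pos_of_pos (by linarith)).ne'
  rw [integral_const_mul, integral_pow_mul_besselWeight hν, Gamma_nat_add_half, hsplit,
    div_pow, pow_mul, Nat.factorial_two_mul]
  -- otherwise `field_simp` rewrites the argument of `Gamma` and cannot cancel it
  generalize Gamma (ν + 1 / 2) = G at hΓ ⊢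
  push_cast
  field_simp
  ring

theorem besselJ_eq_integral (hν : -(1 / 2) < ν) {x : ℝ} (hx : 0 ≤ x) :
    besselJ ν x = (x / 2) ^ ν / (√π * Gamma (ν + 1 / 2)) *
      ∫ s in Ioc 0 1, cos (x * √s) * besselWeight ν s := by
  set F : ℕ → ℝ → ℝ := fun j s => (-1) ^ j * x ^ (2 * j) / (2 * j)! * (s ^ j * besselWeight ν s)
  have hF_int (j : ℕ) : IntegrableOn (F j) (Ioc 0 1) :=
    (integrableOn_pow_mul_besselWeight hν j).const_mul _
  have hF_norm (j : ℕ) :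
      ∫ s in Ioc 0 1, ‖F j s‖ ≤ x ^ (2 * j) / (2 * j)! * ∫ s in Ioc 0 1, besselWeight ν s := by
    rw [← integral_const_mul]
    refine setIntegral_mono_on (hF_int j).norm ((integrableOn_besselWeight hν).const_mul _)
      measurableSet_Ioc fun s hs => ?_
    have hw := besselWeight_nonneg (ν := ν) (Ioc_subset_Icc_self hs)
    have hsj : s ^ j ≤ 1 := pow_le_one₀ hs.1.le hs.2
    rw [norm_mul, norm_div, norm_mul, norm_pow, norm_neg, norm_one, one_pow, one_mul,
      Real.norm_of_nonneg (by positivity), Real.norm_of_nonneg (by positivity),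
      Real.norm_of_nonneg (mul_nonneg (pow_nonneg hs.1.le j) hw)]
    gcongr
    exact mul_le_of_le_one_left hw hsj
  have hsum : Summable fun j => ∫ s in Ioc 0 1, ‖F j s‖ :=
    Summable.of_nonneg_of_le (fun j => integral_nonneg fun s => norm_nonneg _) hF_norm
      (((summable_pow_div_factorial x).comp_injective
        (mul_right_injective₀ two_ne_zero)).mul_right _)
  rw [besselJ, tsum_congr (besselJ_term_eq_integral hν hx), tsum_mul_left,
    integral_tsum_of_summable_integral_norm hF_int hsum]
  exact congrArg _ (setIntegral_congr_fun measurableSet_Ioc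
    fun s hs => (hasSum_cos_mul_besselWeight x hs.1.le).tsum_eq)

theorem abs_besselJ_le (hν : -(1 / 2) < ν) {x : ℝ} (hx : 0 ≤ x) :
    |besselJ ν x| ≤ (x / 2) ^ ν / Gamma (ν + 1) := by
  have hΓ := Gamma_pos_of_pos (show 0 < ν + 1 / 2 by linarith)
  have hI : ‖∫ s in Ioc 0 1, cos (x * √s) * besselWeight ν s‖
      ≤ ∫ s in Ioc 0 1, besselWeight ν s := by
    refine norm_integral_le_of_norm_le (integrableOn_besselWeight hν) ?_
    filter_upwards [ae_restrict_mem measurableSet_Ioc] with s hs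
    have hw := besselWeight_nonneg (ν := ν) (Ioc_subset_Icc_self hs)
    rw [norm_mul, Real.norm_of_nonneg hw]
    exact mul_le_of_le_one_left hw (abs_cos_le_one _)
  rw [besselJ_eq_integral hν hx, abs_mul, abs_of_nonneg (by positivity), ← Real.norm_eq_abs]
  calc _ ≤ (x / 2) ^ ν / (√π * Gamma (ν + 1 / 2)) * ∫ s in Ioc 0 1, besselWeight ν s := by
        gcongr
    _ = (x / 2) ^ ν / Gamma (ν + 1) := by
        rw [integral_besselWeight hν]
        generalize Gamma (ν + 1 / 2) = G at hΓ ⊢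
        field_simp

end PoissonIntegral

lemma Gamma_add_one_mul_rpow_le {x y : ℝ} (hx : 0 < x) (hxy : x ≤ y) :
    Gamma (x + 1) * x ^ (y - x) ≤ Gamma (y + 1) := by
  rcases hxy.eq_or_lt with rfl | hlt
  · simp
  have hΓx := Gamma_pos_of_pos hx
  have hΓy1 := Gamma_pos_of_pos (show 0 < y + 1 by linarith)
  -- the slope of `log ∘ Gamma` on `[x, x + 1]` is `log x`
  have hslope := convexOn_log_Gamma.slope_mono_adjacent (mem_Ioi.2 hx)
    (mem_Ioi.2 (show 0 < y + 1 by linarith)) (lt_add_one x) (by linarith)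
  simp only [Function.comp_apply, Gamma_add_one hx.ne', log_mul hx.ne' hΓx.ne',
    add_sub_cancel_left, add_sub_cancel_right, div_one, add_sub_add_right_eq_sub] at hslope
  rw [← log_le_log_iff (by positivity) hΓy1, log_mul (by positivity) (by positivity),
    log_rpow hx, Gamma_add_one hx.ne', log_mul hx.ne' hΓx.ne']
  have := (le_div_iff₀ (sub_pos.2 hlt)).1 hslope
  linarith

lemma rpow_mul_exp_neg_le {x y : ℝ} (hx : 1 ≤ x) (hxy : x ≤ y) (hyx : y ≤ x + 1) :
    y ^ y * exp (-y) ≤ exp 1 * (x ^ y * exp (-x)) := by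
  have hx0 : 0 < x := by linarith
  have hratio : y / x ≤ exp ((y - x) / x) := by
    rw [sub_div, div_self hx0.ne']
    simpa using add_one_le_exp (y / x - 1)
  -- `y (y - x) / x = (y - x) + (y - x)² / x ≤ (y - x) + 1`
  have hexp : y * (y - x) / x ≤ y - x + 1 := by
    rw [div_le_iff₀ hx0]
    nlinarith
  calc y ^ y * exp (-y) = x ^ y * (y / x) ^ y * exp (-y) := by
        rw [div_rpow (by linarith) hx0.le]
        field_simp
    _ ≤ x ^ y * exp ((y - x) / x) ^ y * exp (-y) := by
        gcongr
        exacts [div_nonneg (by linarith) hx0.le, by linarith]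
    _ ≤ x ^ y * exp (y - x + 1) * exp (-y) := by
        rw [← exp_mul]
        gcongr
        rwa [mul_comm, ← mul_div_assoc]
    _ = exp 1 * (x ^ y * exp (-x)) := by
        rw [mul_assoc, ← exp_add, show y - x + 1 + -y = 1 + -x by ring, exp_add]
        ring

theorem stirling_le_exp_one_mul_Gamma_add_one {ν : ℝ} (hν : 1 ≤ ν) :
    √(π * ν) * (ν / exp 1) ^ ν ≤ exp 1 * Gamma (ν + 1) := by
  set n := ⌊ν⌋₊
  have hn : (1 : ℝ) ≤ n := by exact_mod_cast Nat.le_floor (by exact_mod_cast hν)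
  have hnν : (n : ℝ) ≤ ν := Nat.floor_le (by linarith)
  have hνn : ν ≤ n + 1 := (Nat.lt_floor_add_one ν).le
  calc √(π * ν) * (ν / exp 1) ^ ν
      = √(π * ν) * (ν ^ ν * exp (-ν)) := by
        rw [div_rpow (by linarith) (exp_pos 1).le, exp_one_rpow, exp_neg, div_eq_mul_inv]
    _ ≤ √(2 * π * n) * (exp 1 * (n ^ ν * exp (-n))) :=
        mul_le_mul (sqrt_le_sqrt (by nlinarith [pi_pos])) (rpow_mul_exp_neg_le hn hnν hνn)
          (by positivity) (by positivity)
    _ = exp 1 * (√(2 * π * n) * (n / exp 1) ^ n * (n : ℝ) ^ (ν - n)) := by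
        rw [rpow_sub (by linarith), rpow_natCast, div_pow, exp_neg, ← exp_nat_mul, mul_one]
        field_simp
    _ ≤ exp 1 * (n ! * (n : ℝ) ^ (ν - n)) := by
        gcongr
        exact Stirling.le_factorial_stirling n
    _ ≤ exp 1 * Gamma (ν + 1) := by
        gcongr
        rw [← Gamma_nat_eq_factorial]
        exact Gamma_add_one_mul_rpow_le (by linarith) hnν

/-- Upper bound `|J_ν(νδ)| ≪ ν^{-1/2} (eδ/2)^ν` for `ν ≥ 1` and `δ ≥ 0`. -/
theorem besselJ_upper_bound :
    ∃ C : ℝ, 0 < C ∧ ∀ ν : ℝ, 1 ≤ ν → ∀ δ : ℝ, 0 ≤ δ →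
      |besselJ ν (ν * δ)| ≤ C * ν ^ (-(1 : ℝ) / 2) * (Real.exp 1 * δ / 2) ^ ν := by
  refine ⟨exp 1 / √π, by positivity, fun ν hν δ hδ => ?_⟩
  have hν0 : 0 < ν := by linarith
  have hsplit : (ν * δ / 2) ^ ν = (ν / exp 1) ^ ν * (exp 1 * δ / 2) ^ ν := by
    rw [← mul_rpow (by positivity) (by positivity)]
    field_simp
  have hroot : ν ^ (-(1 : ℝ) / 2) = (√ν)⁻¹ := by
    rw [neg_div, rpow_neg hν0.le, ← sqrt_eq_rpow]
  calc |besselJ ν (ν * δ)| ≤ (ν * δ / 2) ^ ν / Gamma (ν + 1) :=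
        abs_besselJ_le (by linarith) (by positivity)
    _ ≤ (ν * δ / 2) ^ ν / (√(π * ν) * (ν / exp 1) ^ ν / exp 1) := by
        gcongr
        rw [div_le_iff₀ (exp_pos 1)]
        linarith [stirling_le_exp_one_mul_Gamma_add_one hν]
    _ = exp 1 / √π * ν ^ (-(1 : ℝ) / 2) * (exp 1 * δ / 2) ^ ν := by
        rw [hsplit, hroot, sqrt_mul pi_pos.le]
        field_simp
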